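/- arXiv:1504.04214 — 2 statements merged into one kernel-verified Lean document; each statement's English description precedes it below -/
import Mathlib

section
/- Let f be a mixing piecewise expanding unimodal map with C² branches, and let M be a constant such that ‖𝓛ⁿ(1)‖_∞ ≤ M for all n ≥ 0. Then for all positive integers k, i₁, …, i_k and positive integers m₁ > m₂ > … > m_k, and for all bounded functions h₁, …, h_k of bounded variation on [0,1], one has ‖𝔇^{i₁,…,i_k}_{m₁,…,m_k}(h₁,…,h_k)‖_∞ ≤ M^k λ^{−i₁ m₁} λ^{−i₂ m₂} ⋯ λ^{−i_k m_k} ‖h₁‖_∞ ‖h₂‖_∞ ⋯ ‖h_k‖_∞. -/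
open MeasureTheory Set Filter Topology Asymptotics
open scoped ENNReal NNReal

/-- `BoundedVariationOn` on the unit interval. -/
def bvOn (φ : ℝ → ℝ) : Prop := BoundedVariationOn φ (Set.Icc 0 1)

/-- The supremum norm of `φ` over `[0,1]`. -/
noncomputable def supNorm (φ : ℝ → ℝ) : ℝ := ⨆ x : Set.Icc (0:ℝ) 1, |φ (x : ℝ)|

/-- The total variation of `φ` over `[0,1]`, as a real number. -/
noncomputable def var01 (φ : ℝ → ℝ) : ℝ := (eVariationOn φ (Set.Icc 0 1)).toReal

/-- The BV norm `‖φ‖_BV = ‖φ‖_∞ + var(φ)` on `[0,1]`. -/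
noncomputable def bvNorm (φ : ℝ → ℝ) : ℝ := supNorm φ + var01 φ

/-- The BV norm with values in `ℝ≥0∞` (no junk values). -/
noncomputable def eBVnorm (φ : ℝ → ℝ) : ℝ≥0∞ :=
  (⨆ x : Set.Icc (0:ℝ) 1, (‖φ (x : ℝ)‖₊ : ℝ≥0∞)) + eVariationOn φ (Set.Icc 0 1)

/-- The Heaviside-type function `H_a` with value `1` left of `a`, `1/2` at `a`, `0` right of `a`. -/
noncomputable def Hstep (a x : ℝ) : ℝ := if x < a then 1 else if x = a then 1/2 else 0

/-- A piecewise expanding unimodal map (PEUM) of `[0,1]`: a map `f` with critical point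
`c ∈ (0,1)` whose two branches `f₁` (on `[0, c+ε]`) and `f₂` (on `[c-ε, 1]`) are `C²` and
satisfy `|Df_j| ≥ λ > 1`. -/
structure PEUM where
  f : ℝ → ℝ
  c : ℝ
  eps : ℝ
  lam : ℝ
  f₁ : ℝ → ℝ
  f₂ : ℝ → ℝ
  mapsTo : Set.MapsTo f (Set.Icc (0:ℝ) 1) (Set.Icc (0:ℝ) 1)
  c_mem : c ∈ Set.Ioo (0:ℝ) 1
  eps_pos : 0 < eps
  lam_gt_one : 1 < lam
  smooth₁ : ContDiffOn ℝ 2 f₁ (Set.Icc 0 (c + eps))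
  smooth₂ : ContDiffOn ℝ 2 f₂ (Set.Icc (c - eps) 1)
  eq₁ : ∀ x ∈ Set.Icc (0:ℝ) 1, x ≤ c → f x = f₁ x
  eq₂ : ∀ x ∈ Set.Icc (0:ℝ) 1, c ≤ x → f x = f₂ x
  branch_eq : f₁ c = f₂ c
  expand₁ : ∀ x ∈ Set.Icc 0 (c + eps), lam ≤ |deriv f₁ x|
  expand₂ : ∀ x ∈ Set.Icc (c - eps) 1, lam ≤ |deriv f₂ x|

namespace PEUM

/-- Both branches of `P` are of class `C^r`. -/
def BranchSmooth (P : PEUM) (r : ℕ) : Prop :=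
  ContDiffOn ℝ r P.f₁ (Set.Icc 0 (P.c + P.eps)) ∧
  ContDiffOn ℝ r P.f₂ (Set.Icc (P.c - P.eps) 1)

/-- The weighted transfer operator `𝓛_m φ(x) = Σ_{f(y)=x} φ(y)/((Df(y))^m |Df(y)|)`,
the sum ranging over preimages `y ∈ [0,1]` of `x`. -/
noncomputable def transfer (P : PEUM) (m : ℕ) (φ : ℝ → ℝ) : ℝ → ℝ := fun x =>
  ∑' y : {y : ℝ // y ∈ Set.Icc (0:ℝ) 1 ∧ P.f y = x},
    φ y.1 / ((deriv P.f y.1) ^ m * |deriv P.f y.1|)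

/-- The Perron–Frobenius operator `𝓛 = 𝓛₀`. -/
noncomputable def PF (P : PEUM) : (ℝ → ℝ) → ℝ → ℝ := P.transfer 0

/-- `ξ(z) = D²f(z)/Df(z)`. -/
noncomputable def xi (P : PEUM) : ℝ → ℝ := fun z => deriv (deriv P.f) z / deriv P.f z

/-- The measure `ρ dx` on `[0,1]`. -/
noncomputable def invMeasure (P : PEUM) (ρ : ℝ → ℝ) : Measure ℝ :=
  (volume.restrict (Set.Icc (0:ℝ) 1)).withDensity fun x => ENNReal.ofReal (ρ x)

/-- `ρ` is the (BV representative of the) density of the absolutely continuous invariant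
probability measure of `P`: it is nonnegative, of bounded variation, `ρ dx` is an
`f`-invariant probability measure, and `𝓛ρ = ρ` on `[0,1]`. -/
def IsInvariantDensity (P : PEUM) (ρ : ℝ → ℝ) : Prop :=
  bvOn ρ ∧ (∀ x, 0 ≤ ρ x) ∧ IsProbabilityMeasure (P.invMeasure ρ) ∧
    (P.invMeasure ρ).map P.f = P.invMeasure ρ ∧
    ∀ x ∈ Set.Icc (0:ℝ) 1, P.PF ρ x = ρ x

/-- Exponential mixing at rate `θ < 1`:
`𝓛ⁿh = (∫₀¹ h) ρ + O(θⁿ ‖h‖_BV)` for all `h` of bounded variation. -/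
def Mixing (P : PEUM) (ρ : ℝ → ℝ) (θ : ℝ) : Prop :=
  0 < θ ∧ θ < 1 ∧ ∃ C : ℝ, 0 < C ∧ ∀ h : ℝ → ℝ, bvOn h → ∀ n : ℕ, ∀ x ∈ Set.Icc (0:ℝ) 1,
    |(P.PF)^[n] h x - (∫ z in Set.Icc (0:ℝ) 1, h z) * ρ x| ≤ C * θ ^ n * bvNorm h

/-- `ρ₁ = −Σ_{i=1}^∞ 𝓛₁^i(ξ·ρ)` (pointwise sum of the series). -/
noncomputable def rho1 (P : PEUM) (ρ : ℝ → ℝ) : ℝ → ℝ := fun x =>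
  -∑' i : ℕ, (P.transfer 1)^[i + 1] (fun y => P.xi y * ρ y) x

/-- The operator `𝔇^{i₁,…,i_k}_{m₁,…,m_k}(h₁,…,h_k)`, encoded on the list
`[(i₁,m₁,h₁),…,(i_k,m_k,h_k)]` by `𝔇((i,m,h) :: rest) = 𝓛_m^i (h · 𝔇(rest))`. -/
noncomputable def DD (P : PEUM) : List (ℕ × ℕ × (ℝ → ℝ)) → ℝ → ℝ
  | [] => fun _ => 1
  | p :: rest => (P.transfer p.2.1)^[p.1] fun x => p.2.2 x * P.DD rest x

/-- The set `𝒩_β` of points approached exponentially fast (at rate `β`) by the critical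
orbit: `|c_n − x| ≤ βⁿ` for infinitely many `n`. -/
def Nbeta (P : PEUM) (β : ℝ) : Set ℝ :=
  {x ∈ Set.Icc (0:ℝ) 1 | ∃ᶠ n in Filter.atTop, |P.f^[n] P.c - x| ≤ β ^ n}

end PEUM

/-!
Each branch of `f` expands by at least `λ`, so every term of `𝓛_m φ` carries an extra factor
`|Df|^{-m} ≤ λ^{-m}` compared with `𝓛|φ|`; hence `|𝓛_m φ| ≤ λ^{-m} 𝓛 ψ` whenever `|φ| ≤ ψ`, and
by iteration `|𝓛_m^i φ| ≤ λ^{-im} ‖φ‖_∞ 𝓛^i 1 ≤ M λ^{-im} ‖φ‖_∞`. Applying this to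
`φ = h₁ · 𝔇(h₂, …, h_k)` gives the bound by induction on `k`.
-/

open Function

theorem injOn_Icc_of_deriv_ne_zero {g : ℝ → ℝ} {a b : ℝ} (hg : ContinuousOn g (Icc a b))
    (hg' : ∀ z ∈ Ioo a b, deriv g z ≠ 0) : InjOn g (Icc a b) := by
  have hne_of_lt : ∀ x ∈ Icc a b, ∀ y ∈ Icc a b, x < y → g x ≠ g y :=
    fun x hx y hy hxy hgxy => by
      obtain ⟨z, hz, hz0⟩ := exists_deriv_eq_zero hxy (hg.mono (Icc_subset_Icc hx.1 hy.2)) hgxy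
      exact hg' z (Ioo_subset_Ioo hx.1 hy.2 hz) hz0
  intro x hx y hy hxy
  by_contra hne
  rcases lt_or_gt_of_ne hne with h | h
  exacts [hne_of_lt x hx y hy h hxy, hne_of_lt y hy x hx h hxy.symm]

theorem deriv_eq_zero_or_eq_of_eqOn {f g : ℝ → ℝ} {s : Set ℝ} {y : ℝ} (hfg : EqOn f g s)
    (hy : y ∈ s) (hs : UniqueDiffWithinAt ℝ s y) (hg : DifferentiableAt ℝ g y) :
    deriv f y = 0 ∨ deriv f y = deriv g y := by
  by_cases hf : DifferentiableAt ℝ f y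
  · right
    rw [← hf.hasDerivAt.hasDerivWithinAt.derivWithin hs,
      ← hg.hasDerivAt.hasDerivWithinAt.derivWithin hs]
    exact derivWithin_congr hfg (hfg hy)
  · exact Or.inl (deriv_zero_of_not_differentiableAt hf)

theorem abs_le_supNorm {φ : ℝ → ℝ} (hφ : ∃ B : ℝ, ∀ x ∈ Icc (0:ℝ) 1, |φ x| ≤ B) {x : ℝ}
    (hx : x ∈ Icc (0:ℝ) 1) : |φ x| ≤ supNorm φ := by
  obtain ⟨B, hB⟩ := hφ
  exact le_ciSup (f := fun z : Icc (0:ℝ) 1 => |φ z|)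
    ⟨B, by rintro _ ⟨z, rfl⟩; exact hB z z.2⟩ ⟨x, hx⟩

theorem supNorm_nonneg (φ : ℝ → ℝ) : 0 ≤ supNorm φ :=
  Real.iSup_nonneg fun _ => abs_nonneg _

namespace PEUM

variable (P : PEUM)

theorem lam_pos : 0 < P.lam :=
  one_pos.trans P.lam_gt_one

theorem deriv_ne_zero_of_lam_le {d : ℝ} (h : P.lam ≤ |d|) : d ≠ 0 :=
  abs_pos.mp (P.lam_pos.trans_le h)

theorem injOn_f₁ : InjOn P.f₁ (Icc 0 (P.c + P.eps)) :=
  injOn_Icc_of_deriv_ne_zero P.smooth₁.continuousOn fun z hz =>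
    P.deriv_ne_zero_of_lam_le (P.expand₁ z (Ioo_subset_Icc_self hz))

theorem injOn_f₂ : InjOn P.f₂ (Icc (P.c - P.eps) 1) :=
  injOn_Icc_of_deriv_ne_zero P.smooth₂.continuousOn fun z hz =>
    P.deriv_ne_zero_of_lam_le (P.expand₂ z (Ioo_subset_Icc_self hz))

/-- Each branch is injective, so a fiber of `f` in `[0,1]` has at most two points. -/
instance finite_fiber (x : ℝ) : Finite {y : ℝ // y ∈ Icc (0:ℝ) 1 ∧ P.f y = x} := by
  have hc := P.c_mem
  have heps := P.eps_pos
  have left : {y | y ∈ Icc 0 P.c ∧ P.f₁ y = x}.Subsingleton := fun a ha b hb =>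
    P.injOn_f₁ (Icc_subset_Icc_right (by linarith) ha.1)
      (Icc_subset_Icc_right (by linarith) hb.1) (ha.2.trans hb.2.symm)
  have right : {y | y ∈ Icc P.c 1 ∧ P.f₂ y = x}.Subsingleton := fun a ha b hb =>
    P.injOn_f₂ (Icc_subset_Icc_left (by linarith) ha.1)
      (Icc_subset_Icc_left (by linarith) hb.1) (ha.2.trans hb.2.symm)
  refine Set.Finite.to_subtype ((left.finite.union right.finite).subset fun y hy => ?_)
  obtain ⟨⟨hy0, hy1⟩, hfy⟩ := hy
  rcases le_total y P.c with h | h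
  · exact Or.inl ⟨⟨hy0, h⟩, (P.eq₁ y ⟨hy0, hy1⟩ h).symm.trans hfy⟩
  · exact Or.inr ⟨⟨h, hy1⟩, (P.eq₂ y ⟨hy0, hy1⟩ h).symm.trans hfy⟩

/-- At points where `f` is not differentiable (possibly `c`), `deriv` takes the junk value `0`,
and the corresponding term of `𝓛_m` vanishes since `φ y / 0 = 0`. -/
theorem deriv_eq_zero_or_lam_le {y : ℝ} (hy : y ∈ Icc (0:ℝ) 1) :
    deriv P.f y = 0 ∨ P.lam ≤ |deriv P.f y| := by
  have hc := P.c_mem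
  have heps := P.eps_pos
  rcases le_total y P.c with h | h
  · have hy₁ : y ∈ Icc 0 (P.c + P.eps) := ⟨hy.1, by linarith⟩
    rcases deriv_eq_zero_or_eq_of_eqOn (s := Icc 0 P.c)
      (fun z hz => P.eq₁ z ⟨hz.1, hz.2.trans hc.2.le⟩ hz.2)
      ⟨hy.1, h⟩ (uniqueDiffOn_Icc hc.1 y ⟨hy.1, h⟩)
      (differentiableAt_of_deriv_ne_zero (P.deriv_ne_zero_of_lam_le (P.expand₁ y hy₁)))
      with h0 | heq
    · exact Or.inl h0
    · exact Or.inr (heq ▸ P.expand₁ y hy₁)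
  · have hy₂ : y ∈ Icc (P.c - P.eps) 1 := ⟨by linarith, hy.2⟩
    rcases deriv_eq_zero_or_eq_of_eqOn (s := Icc P.c 1)
      (fun z hz => P.eq₂ z ⟨hc.1.le.trans hz.1, hz.2⟩ hz.1)
      ⟨h, hy.2⟩ (uniqueDiffOn_Icc hc.2 y ⟨h, hy.2⟩)
      (differentiableAt_of_deriv_ne_zero (P.deriv_ne_zero_of_lam_le (P.expand₂ y hy₂)))
      with h0 | heq
    · exact Or.inl h0
    · exact Or.inr (heq ▸ P.expand₂ y hy₂)

theorem transfer_const_mul (m : ℕ) (C : ℝ) (φ : ℝ → ℝ) (x : ℝ) :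
    P.transfer m (fun y => C * φ y) x = C * P.transfer m φ x := by
  simp only [transfer, mul_div_assoc, tsum_mul_left]

theorem abs_transfer_le (m : ℕ) {φ ψ : ℝ → ℝ} (h : ∀ y ∈ Icc (0:ℝ) 1, |φ y| ≤ ψ y) (x : ℝ) :
    |P.transfer m φ x| ≤ (P.lam ^ m)⁻¹ * P.transfer 0 ψ x := by
  rw [transfer, transfer, ← tsum_mul_left, ← Real.norm_eq_abs]
  refine (norm_tsum_le_tsum_norm .of_finite).trans
    (Summable.tsum_le_tsum (fun y => ?_) .of_finite .of_finite)
  obtain ⟨y, hy, -⟩ := y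
  have hφψ := h y hy
  simp only [Real.norm_eq_abs, pow_zero, one_mul]
  rcases P.deriv_eq_zero_or_lam_le hy with h0 | hlam
  · simp [h0]
  · have hd := abs_pos.mpr (P.deriv_ne_zero_of_lam_le hlam)
    rw [abs_div, abs_mul, abs_pow, abs_abs]
    calc |φ y| / (|deriv P.f y| ^ m * |deriv P.f y|)
        ≤ ψ y / (P.lam ^ m * |deriv P.f y|) :=
          div_le_div₀ ((abs_nonneg _).trans hφψ) hφψ (mul_pos (pow_pos P.lam_pos m) hd)
            (mul_le_mul_of_nonneg_right (pow_le_pow_left₀ P.lam_pos.le hlam m) hd.le)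
      _ = (P.lam ^ m)⁻¹ * (ψ y / |deriv P.f y|) := by ring

theorem abs_transfer_iterate_le (m : ℕ) {φ : ℝ → ℝ} {B : ℝ}
    (hφ : ∀ y ∈ Icc (0:ℝ) 1, |φ y| ≤ B) (i : ℕ) {x : ℝ} (hx : x ∈ Icc (0:ℝ) 1) :
    |(P.transfer m)^[i] φ x| ≤ (P.lam ^ (i * m))⁻¹ * B * P.PF^[i] (fun _ => 1) x := by
  induction i generalizing x with
  | zero => simpa using hφ x hx
  | succ i ih =>
    rw [iterate_succ_apply', iterate_succ_apply']
    calc |P.transfer m ((P.transfer m)^[i] φ) x|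
        ≤ (P.lam ^ m)⁻¹ *
            P.transfer 0 (fun y => (P.lam ^ (i * m))⁻¹ * B * P.PF^[i] (fun _ => 1) y) x :=
          P.abs_transfer_le m (fun y hy => ih hy) x
      _ = (P.lam ^ ((i + 1) * m))⁻¹ * B * P.PF (P.PF^[i] (fun _ => 1)) x := by
          rw [transfer_const_mul, PF, add_one_mul, pow_add, mul_inv]
          ring

theorem abs_DD_le {M : ℝ}
    (hM : ∀ n : ℕ, ∀ x ∈ Icc (0:ℝ) 1, |P.PF^[n] (fun _ => 1) x| ≤ M)
    (l : List (ℕ × ℕ × (ℝ → ℝ)))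
    (hl : ∀ p ∈ l, ∃ B : ℝ, ∀ x ∈ Icc (0:ℝ) 1, |p.2.2 x| ≤ B) {x : ℝ} (hx : x ∈ Icc (0:ℝ) 1) :
    |P.DD l x| ≤ M ^ l.length * (l.map fun p => ((P.lam ^ (p.1 * p.2.1) : ℝ))⁻¹).prod *
      (l.map fun p => supNorm p.2.2).prod := by
  induction l generalizing x with
  | nil => simp [DD]
  | cons p rest ih =>
    obtain ⟨i, m, h⟩ := p
    set R := M ^ rest.length * (rest.map fun p => ((P.lam ^ (p.1 * p.2.1) : ℝ))⁻¹).prod *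
      (rest.map fun p => supNorm p.2.2).prod
    have hprod : ∀ y ∈ Icc (0:ℝ) 1, |h y * P.DD rest y| ≤ supNorm h * R := fun y hy => by
      rw [abs_mul]
      exact mul_le_mul (abs_le_supNorm (hl _ List.mem_cons_self) hy)
        (ih (fun q hq => hl q (List.mem_cons_of_mem _ hq)) hy) (abs_nonneg _) (supNorm_nonneg h)
    have hcoeff : 0 ≤ (P.lam ^ (i * m))⁻¹ * (supNorm h * R) :=
      mul_nonneg (inv_nonneg.mpr (pow_nonneg P.lam_pos.le _))
        ((abs_nonneg _).trans (hprod 0 ⟨le_rfl, zero_le_one⟩))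
    calc |P.DD ((i, m, h) :: rest) x|
        ≤ (P.lam ^ (i * m))⁻¹ * (supNorm h * R) * P.PF^[i] (fun _ => 1) x :=
          P.abs_transfer_iterate_le m hprod i hx
      _ ≤ (P.lam ^ (i * m))⁻¹ * (supNorm h * R) * M :=
          mul_le_mul_of_nonneg_left ((le_abs_self _).trans (hM i x hx)) hcoeff
      _ = _ := by
          simp only [List.length_cons, List.map_cons, List.prod_cons, R]
          ring

end PEUM

theorem Dop_sup_bound_general (P : PEUM) (M : ℝ)
    (hM : ∀ n : ℕ, ∀ x ∈ Set.Icc (0:ℝ) 1, |(P.PF)^[n] (fun _ => (1:ℝ)) x| ≤ M) :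
    ∀ l : List (ℕ × ℕ × (ℝ → ℝ)), l ≠ [] →
      (∀ p ∈ l, 1 ≤ p.1 ∧ 1 ≤ p.2.1) →
      l.Chain' (fun p q => q.2.1 < p.2.1) →
      (∀ p ∈ l, bvOn p.2.2 ∧ ∃ B : ℝ, ∀ x ∈ Set.Icc (0:ℝ) 1, |p.2.2 x| ≤ B) →
      ∀ x ∈ Set.Icc (0:ℝ) 1,
        |P.DD l x| ≤ M ^ l.length * (l.map fun p => ((P.lam ^ (p.1 * p.2.1) : ℝ))⁻¹).prod *
          (l.map fun p => supNorm p.2.2).prod := by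
  intro l _ _ _ hl x hx
  exact P.abs_DD_le hM l (fun p hp => (hl p hp).2) hx

/-- Proposition 2.6(a). For a mixing PEUM, if `‖𝓛ⁿ1‖_∞ ≤ M` for all `n`,
then for all `i₁,…,i_k ≥ 1`, `m₁ > ⋯ > m_k ≥ 1` and bounded BV functions `h₁,…,h_k`,
`‖𝔇^{i₁,…,i_k}_{m₁,…,m_k}(h₁,…,h_k)‖_∞ ≤ M^k λ^{−i₁m₁} ⋯ λ^{−i_km_k} ‖h₁‖_∞ ⋯ ‖h_k‖_∞`. -/
theorem Dop_sup_bound (P : PEUM) (ρ : ℝ → ℝ) (θ : ℝ)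
    (hρ : P.IsInvariantDensity ρ) (hmix : P.Mixing ρ θ) (M : ℝ)
    (hM : ∀ n : ℕ, ∀ x ∈ Set.Icc (0:ℝ) 1, |(P.PF)^[n] (fun _ => (1:ℝ)) x| ≤ M) :
    ∀ l : List (ℕ × ℕ × (ℝ → ℝ)), l ≠ [] →
      (∀ p ∈ l, 1 ≤ p.1 ∧ 1 ≤ p.2.1) →
      l.Chain' (fun p q => q.2.1 < p.2.1) →
      (∀ p ∈ l, bvOn p.2.2 ∧ ∃ B : ℝ, ∀ x ∈ Set.Icc (0:ℝ) 1, |p.2.2 x| ≤ B) →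
      ∀ x ∈ Set.Icc (0:ℝ) 1,
        |P.DD l x| ≤ M ^ l.length * (l.map fun p => ((P.lam ^ (p.1 * p.2.1) : ℝ))⁻¹).prod *
          (l.map fun p => supNorm p.2.2).prod :=
  Dop_sup_bound_general P M hM
end

section
/- Let f be a piecewise expanding unimodal map with critical point c and write c_n = f^n(c). If the sequence {c_n} is dense in some nondegenerate interval I ⊂ [0,1], then for every 0 < β < 1 the set 𝒩_β = {x ∈ [0,1] : |c_n − x| ≤ βⁿ for infinitely many n} is uncountable. -/
open MeasureTheory Set Filter Topology Asymptotics
open scoped ENNReal NNReal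

/-- A countable subset of `ℝ` is meagre. -/
lemma aux_countable_isMeagre {s : Set ℝ} (hs : s.Countable) : IsMeagre s := by
  rw [isMeagre_iff_countable_union_isNowhereDense]
  refine ⟨(fun x => ({x} : Set ℝ)) '' s, ?_, hs.image _, ?_⟩
  · rintro t ⟨x, -, rfl⟩
    rw [IsNowhereDense, closure_singleton, interior_singleton]
  · intro x hx
    exact Set.mem_sUnion.2 ⟨{x}, ⟨x, hx, rfl⟩, rfl⟩

/-- Abstract version: if a sequence is dense in a nondegenerate subinterval of `[0,1]`,
then the set of points it approaches exponentially fast infinitely often is uncountable. -/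
lemma aux_uncountable (c : ℕ → ℝ) (a b : ℝ) (hab : a < b)
    (hI : Set.Icc a b ⊆ Set.Icc (0:ℝ) 1)
    (hdense : Set.Icc a b ⊆ closure {y : ℝ | ∃ n : ℕ, 1 ≤ n ∧ c n = y})
    (β : ℝ) (hβ0 : 0 < β) :
    ¬ ({x ∈ Set.Icc (0:ℝ) 1 | ∃ᶠ n in Filter.atTop, |c n - x| ≤ β ^ n}).Countable := by
  intro hcnt
  set S : Set ℝ := {x ∈ Set.Icc (0:ℝ) 1 | ∃ᶠ n in Filter.atTop, |c n - x| ≤ β ^ n} with hS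
  set E : ℕ → Set ℝ := fun N =>
    (⋃ n, ⋃ _ : N ≤ n ∧ 1 ≤ n, Metric.ball (c n) (β ^ n)) ∪ (Set.Icc a b)ᶜ with hE
  have hEopen : ∀ N, IsOpen (E N) := fun N =>
    (isOpen_iUnion fun n => isOpen_iUnion fun _ => Metric.isOpen_ball).union
      isClosed_Icc.isOpen_compl
  have hEdense : ∀ N, Dense (E N) := by
    intro N
    rw [dense_iff_inter_open]
    intro U hU hUne
    by_cases hsub : U ⊆ Set.Icc a b
    · have hF : ((fun n => c n) '' (Set.Ico 1 N)).Finite := (Set.finite_Ico 1 N).image _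
      obtain ⟨x, hxU⟩ := hUne
      have hUinf : U.Infinite := infinite_of_mem_nhds x (hU.mem_nhds hxU)
      obtain ⟨z, hzU, hzF⟩ := (hUinf.diff hF).nonempty
      have hz1 : z ∈ closure {y : ℝ | ∃ n : ℕ, 1 ≤ n ∧ c n = y} := hdense (hsub hzU)
      have hsplit : {y : ℝ | ∃ n : ℕ, 1 ≤ n ∧ c n = y} ⊆
          ((fun n => c n) '' (Set.Ico 1 N)) ∪ {y : ℝ | ∃ n : ℕ, N ≤ n ∧ 1 ≤ n ∧ c n = y} := by
        rintro y ⟨n, hn1, rfl⟩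
        rcases lt_or_ge n N with h | h
        · exact Or.inl ⟨n, ⟨hn1, h⟩, rfl⟩
        · exact Or.inr ⟨n, h, hn1, rfl⟩
      have hz2 : z ∈ ((fun n => c n) '' (Set.Ico 1 N)) ∪
          closure {y : ℝ | ∃ n : ℕ, N ≤ n ∧ 1 ≤ n ∧ c n = y} := by
        have h3 := closure_mono hsplit hz1
        rwa [closure_union, hF.isClosed.closure_eq] at h3
      have hz3 : z ∈ closure {y : ℝ | ∃ n : ℕ, N ≤ n ∧ 1 ≤ n ∧ c n = y} :=
        hz2.resolve_left hzF
      rw [mem_closure_iff] at hz3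
      obtain ⟨y, hyU, n, hnN, hn1, rfl⟩ := hz3 U hU hzU
      refine ⟨c n, hyU, Or.inl ?_⟩
      exact Set.mem_iUnion.2 ⟨n, Set.mem_iUnion.2
        ⟨⟨hnN, hn1⟩, Metric.mem_ball_self (pow_pos hβ0 n)⟩⟩
    · obtain ⟨x, hxU, hx⟩ := Set.not_subset.1 hsub
      exact ⟨x, hxU, Or.inr hx⟩
  have hG : (⋂ N, E N) ∈ residual ℝ :=
    countable_iInter_mem.2 fun N => residual_of_dense_open (hEopen N) (hEdense N)
  have hsub2 : Set.Icc a b ⊆ S ∪ (⋂ N, E N)ᶜ := by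
    intro x hx
    by_cases hxG : x ∈ ⋂ N, E N
    · left
      refine ⟨hI hx, ?_⟩
      rw [Filter.frequently_atTop]
      intro N
      have hxE := Set.mem_iInter.1 hxG N
      rcases hxE with h | h
      · obtain ⟨n, hmem⟩ := Set.mem_iUnion.1 h
        obtain ⟨⟨hnN, _⟩, hball⟩ := Set.mem_iUnion.1 hmem
        refine ⟨n, hnN, ?_⟩
        have : dist x (c n) < β ^ n := hball
        rw [Real.dist_eq, abs_sub_comm] at this
        exact this.le
      · exact absurd hx h
    · exact Or.inr hxG
  have hmeag1 : IsMeagre S := aux_countable_isMeagre hcnt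
  have hmeag2 : IsMeagre (⋂ N, E N)ᶜ := by
    rw [IsMeagre, compl_compl]; exact hG
  have hmeagU : IsMeagre (S ∪ (⋂ N, E N)ᶜ) := by
    rw [IsMeagre, Set.compl_union]
    exact Filter.inter_mem hmeag1 hmeag2
  have hmeagIcc : IsMeagre (Set.Icc a b) := hmeagU.mono hsub2
  have hdc : Dense (Set.Icc a b)ᶜ := dense_of_mem_residual hmeagIcc
  obtain ⟨y, hy1, hy2⟩ :=
    dense_iff_inter_open.1 hdc (Set.Ioo a b) isOpen_Ioo (Set.nonempty_Ioo.2 hab)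
  exact hy2 (Set.Ioo_subset_Icc_self hy1)

/-- Proposition 4.9. For a PEUM whose critical orbit `{c_n}` is dense in
some nondegenerate interval `I ⊆ [0,1]`, the set `𝒩_β` is uncountable for every
`0 < β < 1`. -/
theorem Nbeta_uncountable (P : PEUM) (a b : ℝ) (hab : a < b)
    (hI : Set.Icc a b ⊆ Set.Icc (0:ℝ) 1)
    (hdense : Set.Icc a b ⊆ closure {y : ℝ | ∃ n : ℕ, 1 ≤ n ∧ P.f^[n] P.c = y})
    (β : ℝ) (hβ0 : 0 < β) (hβ1 : β < 1) :
    ¬ (P.Nbeta β).Countable := by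
  exact aux_uncountable (fun n => P.f^[n] P.c) a b hab hI hdense β hβ0
end
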